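/- Let σ^{(1)},…,σ^{(2n)} ∈ {-1,1}^N and define Q_{2n} = ∑_{l=1}^{n} ∑_{r_1 < ⋯ < r_{2l}} q_{r_1⋯r_{2l}}, where the inner sum runs over all subsets {r_1,…,r_{2l}} ⊆ {1,…,2n} of even cardinality 2l, and q_{r_1⋯r_{2l}} = (1/N)∑_{i=1}^N σ^{(r_1)}_i ⋯ σ^{(r_{2l})}_i. Then 1 + Q_{2n} = (1/N) ∑_{i=1}^N ∏_{a=1}^{2n} (1 + σ^{(a)}_i)/2 · 2^{2n-1} + (1/N) ∑_{i=1}^N ∏_{a=1}^{2n} (1 - σ^{(a)}_i)/2 · 2^{2n-1}, and in particular 0 ≤ 1 + Q_{2n} ≤ 2^{2n-1}. -/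

import Mathlib

/-!
Expanding `∏ a, (1 + σ a) + ∏ a, (1 - σ a)` over subsets of replicas, the odd subsets cancel and
the even ones appear twice, so at every site `1 + ∑_{S even, S ≠ ∅} ∏_{a ∈ S} σ a` equals
`2 ^ (2n - 1) * (∏ a, (1 + σ a) / 2 + ∏ a, (1 - σ a) / 2)`; averaging over sites gives the
identity. The factors `(1 ± σ a) / 2` lie in `[0, 1]` and sum to `1`, so the bracket lies in
`[0, 1]` (for spins `±1` it is the indicator that all replicas agree).
-/

open Finset

namespace Finset

variable {ι : Type*}

theorem two_mul_sum_powerset_even_prod {R : Type*} [CommRing R] (s : Finset ι) (x : ι → R) :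
    2 * ∑ t ∈ s.powerset with Even #t, ∏ i ∈ t, x i
      = ∏ i ∈ s, (1 + x i) + ∏ i ∈ s, (1 - x i) := by
  simp_rw [sub_eq_add_neg, prod_one_add, prod_neg, ← sum_add_distrib, sum_filter, mul_sum]
  refine sum_congr rfl fun t _ => ?_
  rcases Nat.even_or_odd #t with h | h
  · rw [if_pos h, h.neg_one_pow]; ring
  · rw [if_neg (Nat.not_even_iff_odd.mpr h), h.neg_one_pow]; ring

theorem one_add_sum_powerset_nonempty_even_prod {R : Type*} [CommSemiring R] (s : Finset ι)
    (x : ι → R) :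
    1 + ∑ t ∈ s.powerset with t.Nonempty ∧ Even #t, ∏ i ∈ t, x i
      = ∑ t ∈ s.powerset with Even #t, ∏ i ∈ t, x i := by
  classical
  have hsplit :
      {t ∈ s.powerset | Even #t} = insert ∅ {t ∈ s.powerset | t.Nonempty ∧ Even #t} := by
    ext t
    rcases t.eq_empty_or_nonempty with rfl | ht
    · simp
    · simp [ht, ht.ne_empty]
  rw [hsplit, sum_insert (by simp), prod_empty]

theorem one_add_sum_powerset_nonempty_even_prod_eq {K : Type*} [Field K] [NeZero (2 : K)]
    {s : Finset ι} (hs : s.Nonempty) (x : ι → K) :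
    1 + ∑ t ∈ s.powerset with t.Nonempty ∧ Even #t, ∏ i ∈ t, x i
      = 2 ^ (#s - 1) * ∏ i ∈ s, (1 + x i) / 2 + 2 ^ (#s - 1) * ∏ i ∈ s, (1 - x i) / 2 := by
  obtain ⟨m, hm⟩ := Nat.exists_eq_add_one_of_ne_zero hs.card_pos.ne'
  rw [one_add_sum_powerset_nonempty_even_prod, ← mul_add, prod_div_distrib, prod_div_distrib,
    prod_const, hm, Nat.add_sub_cancel, ← add_div, ← two_mul_sum_powerset_even_prod]
  field_simp
  ring

theorem prod_add_prod_le_one {R : Type*} [CommSemiring R] [PartialOrder R] [IsOrderedRing R]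
    {s : Finset ι} (hs : s.Nonempty) {u v : ι → R} (hu : ∀ i ∈ s, 0 ≤ u i)
    (hv : ∀ i ∈ s, 0 ≤ v i) (huv : ∀ i ∈ s, u i + v i = 1) :
    ∏ i ∈ s, u i + ∏ i ∈ s, v i ≤ 1 := by
  classical
  obtain ⟨a, ha⟩ := hs
  have hle : ∀ w : ι → R, (∀ i ∈ s, 0 ≤ w i) → (∀ i ∈ s, w i ≤ 1) → ∏ i ∈ s, w i ≤ w a := by
    intro w hw0 hw1
    rw [← mul_prod_erase s w ha]
    exact mul_le_of_le_one_right (hw0 a ha)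
      (prod_le_one (fun i hi => hw0 i (mem_of_mem_erase hi))
        fun i hi => hw1 i (mem_of_mem_erase hi))
  calc ∏ i ∈ s, u i + ∏ i ∈ s, v i ≤ u a + v a :=
        add_le_add (hle u hu fun i hi => huv i hi ▸ le_add_of_nonneg_right (hv i hi))
          (hle v hv fun i hi => huv i hi ▸ le_add_of_nonneg_left (hu i hi))
    _ = 1 := huv a ha

theorem one_add_sum_powerset_nonempty_even_prod_mem_Icc {K : Type*} [Field K] [LinearOrder K]
    [IsStrictOrderedRing K] {s : Finset ι} (hs : s.Nonempty) {x : ι → K}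
    (hx : ∀ i ∈ s, x i ∈ Set.Icc (-1) 1) :
    1 + ∑ t ∈ s.powerset with t.Nonempty ∧ Even #t, ∏ i ∈ t, x i ∈ Set.Icc 0 (2 ^ (#s - 1)) := by
  have hplus : ∀ i ∈ s, 0 ≤ (1 + x i) / 2 := fun i hi => by linarith [(hx i hi).1]
  have hminus : ∀ i ∈ s, 0 ≤ (1 - x i) / 2 := fun i hi => by linarith [(hx i hi).2]
  have hsum := prod_add_prod_le_one hs hplus hminus fun i _ => by ring
  rw [one_add_sum_powerset_nonempty_even_prod_eq hs, ← mul_add]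
  exact ⟨mul_nonneg (by positivity) (add_nonneg (prod_nonneg hplus) (prod_nonneg hminus)),
    mul_le_of_le_one_right (by positivity) hsum⟩

end Finset

theorem one_add_sum_mean {κ : Type*} (T : Finset κ) {N : ℕ} (hN : N ≠ 0) (g : κ → Fin N → ℝ) :
    1 + ∑ t ∈ T, (1 / (N : ℝ)) * ∑ i, g t i = (1 / (N : ℝ)) * ∑ i, (1 + ∑ t ∈ T, g t i) := by
  rw [sum_add_distrib, sum_const, card_univ, Fintype.card_fin, ← mul_sum, sum_comm, mul_add]
  field_simp
  simp

theorem one_add_Q_representation (N n : ℕ) (hN : 1 ≤ N) (hn : 1 ≤ n)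
    (σ : Fin (2 * n) → Fin N → ℝ) (hσ : ∀ a i, σ a i = 1 ∨ σ a i = -1) :
    (1 + ∑ S ∈ Finset.univ.powerset.filter
          (fun S : Finset (Fin (2 * n)) => S.Nonempty ∧ Even S.card),
        (1 / (N : ℝ)) * ∑ i : Fin N, ∏ a ∈ S, σ a i)
      = (1 / (N : ℝ)) * ∑ i : Fin N,
          (2 ^ (2 * n - 1) * ∏ a : Fin (2 * n), (1 + σ a i) / 2
            + 2 ^ (2 * n - 1) * ∏ a : Fin (2 * n), (1 - σ a i) / 2)
    ∧ 0 ≤ 1 + ∑ S ∈ Finset.univ.powerset.filter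
          (fun S : Finset (Fin (2 * n)) => S.Nonempty ∧ Even S.card),
        (1 / (N : ℝ)) * ∑ i : Fin N, ∏ a ∈ S, σ a i
    ∧ 1 + ∑ S ∈ Finset.univ.powerset.filter
          (fun S : Finset (Fin (2 * n)) => S.Nonempty ∧ Even S.card),
        (1 / (N : ℝ)) * ∑ i : Fin N, ∏ a ∈ S, σ a i ≤ 2 ^ (2 * n - 1) := by
  have hreplicas : (univ : Finset (Fin (2 * n))).Nonempty := univ_nonempty_iff.mpr ⟨⟨0, by omega⟩⟩
  have hcard : #(univ : Finset (Fin (2 * n))) = 2 * n := card_fin _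
  have hspin : ∀ i, ∀ a ∈ univ, σ a i ∈ Set.Icc (-1) 1 := fun i a _ => by
    rcases hσ a i with h | h <;> simp [h]
  have hsite := fun i => hcard ▸ one_add_sum_powerset_nonempty_even_prod_eq hreplicas (σ · i)
  have hbound := fun i =>
    hcard ▸ one_add_sum_powerset_nonempty_even_prod_mem_Icc hreplicas (hspin i)
  rw [one_add_sum_mean _ (by omega)]
  refine ⟨congrArg _ (sum_congr rfl fun i _ => hsite i), ?_, ?_⟩
  · exact mul_nonneg (by positivity) (sum_nonneg fun i _ => (hbound i).1)
  · calc (1 / (N : ℝ)) * ∑ i, _ ≤ (1 / (N : ℝ)) * ∑ _i : Fin N, (2 : ℝ) ^ (2 * n - 1) :=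
          mul_le_mul_of_nonneg_left (sum_le_sum fun i _ => (hbound i).2) (by positivity)
      _ = 2 ^ (2 * n - 1) := by
          rw [sum_const, card_univ, Fintype.card_fin, nsmul_eq_mul]
          field_simp
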